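/- arXiv:2604.12694 — 3 statements merged into one kernel-verified Lean document; each statement's English description precedes it below -/
import Mathlib

section
/- Let φ(β) = λ ∑_{j=1}^p d_j |β_j| be a weighted ℓ₁ penalty and ψ(β) = μ ∑_{ℓ=1}^g w_ℓ ‖β_{G_ℓ}‖₂ a weighted group-ℓ₂ penalty over a partition G₁,…,G_g of {1,…,p}, with λ, μ ≥ 0 and d, w ≥ 0. Then the proximal mapping of the sum decomposes as a composition: prox_{φ+ψ}(ξ) = prox_ψ( prox_φ(ξ) ) for all ξ ∈ ℝ^p. -/
/-!
Both thresholding operators are instances of the prox of `b‖·‖` in a real inner product space,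
`p = (max (‖x‖ - b) 0 / ‖x‖) • x` (for `E = ℝ` this is scalar soft-thresholding, for a block of
coordinates it is group shrinkage). Writing `F x u = b‖u‖ + ½‖u - x‖²`, the point `p` satisfies
`‖x - p‖ ≤ b` and `⟪x - p, p⟫ = b‖p‖`, which give the strongly convex prox inequality
`F x p + ½‖u - p‖² ≤ F x u`, and, for every `c ≥ 0`, the Pythagorean identity
`F x (c • p) = F x p + ½‖c • p - p‖²`.

Group shrinkage rescales each block of `S = prox_φ ξ` by a nonnegative factor, so the identity
moves the `ℓ₁` part of the objective from `T` to `S`; the prox inequality for `ψ` at `S` and the one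
for `φ` at `ξ` then add up to `Φ T + ½‖u - T‖² ≤ Φ u` for the full objective `Φ`. This gives both
optimality and uniqueness of `T`.
-/

open Finset
open scoped InnerProductSpace

theorem sum_eq_sum_sum_of_existsUnique_mem {ι κ M : Type*} [Fintype ι] [Fintype κ]
    [AddCommMonoid M] {G : κ → Finset ι} (hG : ∀ i, ∃! k, i ∈ G k) (f : ι → M) :
    ∑ i, f i = ∑ k, ∑ i ∈ G k, f i := by
  classical
  rw [sum_comm' (t' := univ) (s' := fun i => {k | i ∈ G k}) (by simp)]
  refine sum_congr rfl fun i _ => ?_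
  rw [sum_const, (Fintype.existsUnique_iff_card_one _).mp (hG i), one_smul]

section SoftThreshold

variable {E : Type*} [NormedAddCommGroup E] [InnerProductSpace ℝ E]

/-- At `x = 0` the coefficient is `0 / 0 = 0`, which is the correct value. -/
noncomputable def softThreshold (b : ℝ) (x : E) : E := (max (‖x‖ - b) 0 / ‖x‖) • x

noncomputable def proxNormObjective (b : ℝ) (x u : E) : ℝ := b * ‖u‖ + 1 / 2 * ‖u - x‖ ^ 2

variable {b : ℝ} {x : E}

theorem exists_softThreshold_eq_nonneg_smul (b : ℝ) (x : E) :
    ∃ c : ℝ, 0 ≤ c ∧ softThreshold b x = c • x :=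
  ⟨_, div_nonneg (le_max_right _ _) (norm_nonneg x), rfl⟩

theorem softThreshold_of_norm_le (h : ‖x‖ ≤ b) : softThreshold b x = 0 := by
  simp [softThreshold, max_eq_right (sub_nonpos.mpr h)]

theorem softThreshold_of_lt_norm (hb : 0 ≤ b) (h : b < ‖x‖) :
    softThreshold b x = (1 - b / ‖x‖) • x := by
  have hx : ‖x‖ ≠ 0 := (hb.trans_lt h).ne'
  rw [softThreshold, max_eq_left (by linarith)]
  congr 1
  field_simp

theorem sub_softThreshold_of_lt_norm (hb : 0 ≤ b) (h : b < ‖x‖) :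
    x - softThreshold b x = (b / ‖x‖) • x := by
  rw [softThreshold_of_lt_norm hb h, sub_smul, one_smul, sub_sub_cancel]

theorem norm_sub_softThreshold_le (hb : 0 ≤ b) : ‖x - softThreshold b x‖ ≤ b := by
  rcases le_or_gt ‖x‖ b with h | h
  · rwa [softThreshold_of_norm_le h, sub_zero]
  · have hx : 0 < ‖x‖ := hb.trans_lt h
    rw [sub_softThreshold_of_lt_norm hb h, norm_smul, Real.norm_of_nonneg (by positivity),
      div_mul_cancel₀ _ hx.ne']

theorem inner_sub_softThreshold_softThreshold (hb : 0 ≤ b) :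
    ⟪x - softThreshold b x, softThreshold b x⟫_ℝ = b * ‖softThreshold b x‖ := by
  rcases le_or_gt ‖x‖ b with h | h
  · simp [softThreshold_of_norm_le h]
  · have hx : 0 < ‖x‖ := hb.trans_lt h
    have hcoeff : 0 ≤ 1 - b / ‖x‖ := by rw [sub_nonneg, div_le_one hx]; exact h.le
    rw [sub_softThreshold_of_lt_norm hb h, softThreshold_of_lt_norm hb h, real_inner_smul_left,
      real_inner_smul_right, real_inner_self_eq_norm_sq, norm_smul, Real.norm_of_nonneg hcoeff]
    field_simp

theorem proxNormObjective_softThreshold_add_half_sq_le (hb : 0 ≤ b) (u : E) :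
    proxNormObjective b x (softThreshold b x) + 1 / 2 * ‖u - softThreshold b x‖ ^ 2
      ≤ proxNormObjective b x u := by
  set p := softThreshold b x
  have hinner : ⟪u, x - p⟫_ℝ ≤ b * ‖u‖ :=
    calc ⟪u, x - p⟫_ℝ ≤ ‖u‖ * ‖x - p‖ := real_inner_le_norm _ _
      _ ≤ ‖u‖ * b := by gcongr; exact norm_sub_softThreshold_le hb
      _ = b * ‖u‖ := mul_comm _ _
  have hexpand : ‖u - x‖ ^ 2 = ‖u - p‖ ^ 2 + 2 * ⟪u - p, p - x⟫_ℝ + ‖p - x‖ ^ 2 := by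
    rw [← norm_add_sq_real, sub_add_sub_cancel]
  have hcross : ⟪u - p, p - x⟫_ℝ = ⟪x - p, p⟫_ℝ - ⟪u, x - p⟫_ℝ := by
    rw [← neg_sub x p, inner_neg_right, inner_sub_left, real_inner_comm p]; ring
  have hp := inner_sub_softThreshold_softThreshold (x := x) hb
  unfold proxNormObjective
  linarith

theorem proxNormObjective_smul_softThreshold (hb : 0 ≤ b) {c : ℝ} (hc : 0 ≤ c) :
    proxNormObjective b x (c • softThreshold b x)
      = proxNormObjective b x (softThreshold b x)
        + 1 / 2 * ‖c • softThreshold b x - softThreshold b x‖ ^ 2 := by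
  set p := softThreshold b x
  have hexpand : ‖c • p - x‖ ^ 2 = ‖c • p - p‖ ^ 2 + 2 * ⟪c • p - p, p - x⟫_ℝ + ‖p - x‖ ^ 2 := by
    rw [← norm_add_sq_real, sub_add_sub_cancel]
  have hcross : ⟪c • p - p, p - x⟫_ℝ = -((c - 1) * ⟪x - p, p⟫_ℝ) := by
    rw [show c • p - p = (c - 1) • p by rw [sub_smul, one_smul], ← neg_sub x p, inner_neg_right,
      real_inner_smul_left, real_inner_comm]
  rw [proxNormObjective, proxNormObjective, norm_smul, Real.norm_of_nonneg hc, hexpand, hcross,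
    inner_sub_softThreshold_softThreshold hb]
  ring

end SoftThreshold

theorem Real.sign_mul_max_abs_sub_eq_softThreshold (a ξ : ℝ) :
    Real.sign ξ * max (|ξ| - a) 0 = softThreshold a ξ := by
  rw [softThreshold, Real.norm_eq_abs, smul_eq_mul]
  rcases lt_trichotomy ξ 0 with h | rfl | h
  · rw [Real.sign_of_neg h, abs_of_neg h]
    field_simp [h.ne]
  · simp
  · rw [Real.sign_of_pos h, abs_of_pos h]
    field_simp

section BlockVec

variable {ι : Type*}

noncomputable def blockVec (t : Finset ι) (v : ι → ℝ) : EuclideanSpace ℝ t :=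
  WithLp.toLp 2 fun i => v i

theorem norm_blockVec (t : Finset ι) (v : ι → ℝ) :
    ‖blockVec t v‖ = √(∑ k ∈ t, v k ^ 2) := by
  simp only [EuclideanSpace.norm_eq, blockVec, Real.norm_eq_abs, sq_abs]
  rw [sum_coe_sort t (fun k => v k ^ 2)]

theorem norm_blockVec_sub_sq (t : Finset ι) (u v : ι → ℝ) :
    ‖blockVec t u - blockVec t v‖ ^ 2 = ∑ k ∈ t, (u k - v k) ^ 2 := by
  rw [blockVec, blockVec, ← WithLp.toLp_sub, EuclideanSpace.norm_eq, Real.sq_sqrt (by positivity)]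
  simp only [Pi.sub_apply, Real.norm_eq_abs, sq_abs]
  rw [sum_coe_sort t (fun k => (u k - v k) ^ 2)]

theorem blockVec_eq_softThreshold {t : Finset ι} {S T : ι → ℝ} {b : ℝ}
    (hT : ∀ j ∈ t, T j =
      if √(∑ k ∈ t, S k ^ 2) ≠ 0 then
        (S j / √(∑ k ∈ t, S k ^ 2)) * max (√(∑ k ∈ t, S k ^ 2) - b) 0
      else 0) :
    blockVec t T = softThreshold b (blockVec t S) := by
  ext ⟨j, hj⟩
  rw [softThreshold, norm_blockVec]
  simp only [blockVec, WithLp.ofLp_smul, WithLp.ofLp_toLp, Pi.smul_apply, smul_eq_mul]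
  rw [hT j hj]
  split_ifs with h
  · ring
  · simp [not_not.mp h]

end BlockVec

section SparseGroupLasso

variable {ι κ : Type*} [Fintype ι] [Fintype κ]

noncomputable def sparseGroupLassoObjective (lam μ : ℝ) (d : ι → ℝ) (w : κ → ℝ)
    (G : κ → Finset ι) (ξ u : ι → ℝ) : ℝ :=
  lam * ∑ j, d j * |u j| + μ * ∑ ℓ, w ℓ * √(∑ k ∈ G ℓ, u k ^ 2) + 1 / 2 * ∑ j, (u j - ξ j) ^ 2

theorem sparseGroupLassoObjective_add_half_sq_le {lam μ : ℝ} (hlam : 0 ≤ lam) (hμ : 0 ≤ μ)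
    {d : ι → ℝ} (hd : ∀ j, 0 ≤ d j) {w : κ → ℝ} (hw : ∀ ℓ, 0 ≤ w ℓ) {G : κ → Finset ι}
    (hG : ∀ j, ∃! ℓ, j ∈ G ℓ) {ξ S T : ι → ℝ} (hS : ∀ j, S j = softThreshold (lam * d j) (ξ j))
    (hT : ∀ ℓ, blockVec (G ℓ) T = softThreshold (μ * w ℓ) (blockVec (G ℓ) S)) (u : ι → ℝ) :
    sparseGroupLassoObjective lam μ d w G ξ T + 1 / 2 * ∑ j, (u j - T j) ^ 2
      ≤ sparseGroupLassoObjective lam μ d w G ξ u := by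
  have hcoord_eq : ∀ j, lam * (d j * |T j|) + 1 / 2 * (T j - ξ j) ^ 2
      = lam * (d j * |S j|) + 1 / 2 * (S j - ξ j) ^ 2 + 1 / 2 * (T j - S j) ^ 2 := by
    intro j
    obtain ⟨ℓ, hj⟩ := (hG j).exists
    obtain ⟨c, hc, hc_eq⟩ := exists_softThreshold_eq_nonneg_smul (μ * w ℓ) (blockVec (G ℓ) S)
    have hTj : T j = c • S j := congrArg (fun v => v ⟨j, hj⟩) ((hT ℓ).trans hc_eq)
    have := proxNormObjective_smul_softThreshold (mul_nonneg hlam (hd j)) hc (x := ξ j)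
    simp only [proxNormObjective, Real.norm_eq_abs, sq_abs, ← hS j] at this
    rw [hTj, ← mul_assoc, this, mul_assoc]
  have hcoord_le : ∀ j, lam * (d j * |S j|) + 1 / 2 * (S j - ξ j) ^ 2 + 1 / 2 * (u j - S j) ^ 2
      ≤ lam * (d j * |u j|) + 1 / 2 * (u j - ξ j) ^ 2 := fun j => by
    simpa only [proxNormObjective, Real.norm_eq_abs, sq_abs, ← hS j, mul_assoc] using
      proxNormObjective_softThreshold_add_half_sq_le (mul_nonneg hlam (hd j)) (x := ξ j) (u j)
  have hgroup : ∀ ℓ, μ * (w ℓ * √(∑ k ∈ G ℓ, T k ^ 2)) + 1 / 2 * ∑ k ∈ G ℓ, (T k - S k) ^ 2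
        + 1 / 2 * ∑ k ∈ G ℓ, (u k - T k) ^ 2
      ≤ μ * (w ℓ * √(∑ k ∈ G ℓ, u k ^ 2)) + 1 / 2 * ∑ k ∈ G ℓ, (u k - S k) ^ 2 := fun ℓ => by
    simpa only [proxNormObjective, ← hT ℓ, norm_blockVec, norm_blockVec_sub_sq, mul_assoc] using
      proxNormObjective_softThreshold_add_half_sq_le (mul_nonneg hμ (hw ℓ))
        (x := blockVec (G ℓ) S) (blockVec (G ℓ) u)
  have h_eq := sum_congr rfl fun j (_ : j ∈ univ) => hcoord_eq j
  have h_coord := sum_le_sum fun j (_ : j ∈ univ) => hcoord_le j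
  have h_group := sum_le_sum fun ℓ (_ : ℓ ∈ univ) => hgroup ℓ
  simp only [sum_add_distrib, ← mul_sum] at h_eq h_coord h_group
  simp only [← sum_eq_sum_sum_of_existsUnique_mem hG] at h_group
  unfold sparseGroupLassoObjective
  linarith

end SparseGroupLasso

/-- The prox of the sparse group lasso penalty `φ + ψ` (weighted ℓ₁ plus weighted
group ℓ₂ over a partition) decomposes: `prox_{φ+ψ}(ξ) = prox_ψ(prox_φ(ξ))`,
i.e. group shrinkage applied after coordinatewise soft-thresholding gives the
unique minimizer of `(φ+ψ)(u) + (1/2)‖u - ξ‖²`. -/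
theorem stmt_4 (pp g : ℕ) (lam μ : ℝ) (hlam : 0 ≤ lam) (hμ : 0 ≤ μ)
    (d : Fin pp → ℝ) (hd : ∀ j, 0 ≤ d j)
    (w : Fin g → ℝ) (hw : ∀ ℓ, 0 ≤ w ℓ)
    (G : Fin g → Finset (Fin pp))
    (hpart : ∀ j : Fin pp, ∃! ℓ : Fin g, j ∈ G ℓ)
    (ξ : Fin pp → ℝ)
    (S : Fin pp → ℝ)  -- soft-thresholding of ξ
    (hS : ∀ j, S j = Real.sign (ξ j) * max (|ξ j| - lam * d j) 0)
    (T : Fin pp → ℝ)  -- group shrinkage applied to S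
    (hT : ∀ ℓ : Fin g, ∀ j ∈ G ℓ,
      T j =
        if Real.sqrt (∑ k ∈ G ℓ, (S k)^2) ≠ 0 then
          (S j / Real.sqrt (∑ k ∈ G ℓ, (S k)^2)) *
            max (Real.sqrt (∑ k ∈ G ℓ, (S k)^2) - μ * w ℓ) 0
        else 0) :
    (∀ u : Fin pp → ℝ,
      lam * ∑ j, d j * |T j| + μ * ∑ ℓ, w ℓ * Real.sqrt (∑ k ∈ G ℓ, (T k)^2)
          + (1/2) * ∑ j, (T j - ξ j)^2
        ≤ lam * ∑ j, d j * |u j| + μ * ∑ ℓ, w ℓ * Real.sqrt (∑ k ∈ G ℓ, (u k)^2)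
          + (1/2) * ∑ j, (u j - ξ j)^2) ∧
    (∀ u : Fin pp → ℝ,
      lam * ∑ j, d j * |u j| + μ * ∑ ℓ, w ℓ * Real.sqrt (∑ k ∈ G ℓ, (u k)^2)
          + (1/2) * ∑ j, (u j - ξ j)^2
        = lam * ∑ j, d j * |T j| + μ * ∑ ℓ, w ℓ * Real.sqrt (∑ k ∈ G ℓ, (T k)^2)
          + (1/2) * ∑ j, (T j - ξ j)^2 → u = T) := by
  have key := sparseGroupLassoObjective_add_half_sq_le hlam hμ hd hw hpart
    (fun j => (hS j).trans (Real.sign_mul_max_abs_sub_eq_softThreshold _ _))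
    (fun ℓ => blockVec_eq_softThreshold (hT ℓ))
  unfold sparseGroupLassoObjective at key
  have hdist : ∀ u : Fin pp → ℝ, 0 ≤ ∑ j, (u j - T j) ^ 2 := fun u => by positivity
  refine ⟨fun u => by linarith [key u, hdist u], fun u hu => ?_⟩
  have hzero : ∑ j, (u j - T j) ^ 2 = 0 := by linarith [key u, hdist u]
  have hsq := (Fintype.sum_eq_zero_iff_of_nonneg fun j => sq_nonneg (u j - T j)).mp hzero
  funext j
  exact sub_eq_zero.mp (pow_eq_zero_iff two_ne_zero |>.mp (congrFun hsq j))
end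

section
/- Let g be proper closed convex and consider ADMM applied to min ⟨y,θ⟩ + g(ξ) s.t. Aθ + Bξ = 0 with penalty σ > 0 and step size μ ∈ (0,1]. With errors θ_e^k = θ^k − θ*, ξ_e^k = ξ^k − ξ*, Λ_e^k = Λ^k − Λ*, the iterates satisfy the descent inequality: [ (μσ)^{-1}‖Λ_e^{k+1}‖² + σ‖Bξ_e^{k+1}‖² + σ(1−μ)‖Aθ^{k+1}+Bξ^{k+1}‖² ] − [ same at k ] ≤ −σ‖Aθ^{k+1}+Bξ^{k+1}‖² − σμ‖B(ξ^{k+1}−ξ^k)‖². -/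
/-!
Both ADMM subproblems minimise a convex function plus the quadratic penalty, so comparing the
minimiser `u` with `u + ε • (s - u)` and letting `ε → 0` gives a subgradient inequality, with
multiplier `Λ^k - σ (Aθ + Bξ)` evaluated at the new point. Monotonicity of subgradients then yields
three inequalities: the `θ`-step against `(θ*, Λ*)`, the `ξ`-step against `(ξ*, Λ*)`, and two
consecutive `ξ`-steps against each other. Expanding the squares with
`2⟨u, v⟩ = ‖u‖² + ‖v‖² - ‖u - v‖²`, the descent inequality is twice their sum plus
`σ (1 - μ) ‖Aθ^k + Bξ^k - B(ξ^{k+1} - ξ^k)‖² ≥ 0`.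
-/

open Matrix Set Filter Topology

theorem nonneg_of_forall_mul_add_sq_mul_nonneg {c K : ℝ}
    (h : ∀ ε : ℝ, 0 < ε → ε ≤ 1 → 0 ≤ ε * c + ε ^ 2 * K) : 0 ≤ c := by
  have hlim : Tendsto (fun ε : ℝ => c + ε * K) (𝓝[>] 0) (𝓝 c) :=
    (Continuous.tendsto' (by fun_prop) 0 c (by simp)).mono_left nhdsWithin_le_nhds
  refine ge_of_tendsto hlim ?_
  filter_upwards [Ioc_mem_nhdsGT one_pos] with ε ⟨hε0, hε1⟩
  have := h ε hε0 hε1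
  nlinarith

section

variable {ι κ : Type*} [Fintype ι] [Fintype κ]

def IsSubgradient (f : (ι → ℝ) → ℝ) (u v : ι → ℝ) : Prop :=
  ∀ s, f u + v ⬝ᵥ (s - u) ≤ f s

theorem isSubgradient_dotProduct (y u : ι → ℝ) : IsSubgradient (fun t => y ⬝ᵥ t) u y :=
  fun s => by simp [dotProduct_sub]

theorem IsSubgradient.dotProduct_sub_nonneg {f : (ι → ℝ) → ℝ} {u v w z : ι → ℝ}
    (hu : IsSubgradient f u v) (hw : IsSubgradient f w z) : 0 ≤ (v - z) ⬝ᵥ (u - w) := by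
  have h₁ := hu w
  have h₂ := hw u
  rw [← neg_sub u w, dotProduct_neg] at h₁
  rw [sub_dotProduct]
  linarith

theorem ConvexOn.isSubgradient_of_isMinOn_augmented {f : (ι → ℝ) → ℝ}
    (hf : ConvexOn ℝ univ f) (σ : ℝ) (M : Matrix κ ι ℝ) (Λ a : κ → ℝ) {u : ι → ℝ}
    (hu : IsMinOn (fun x => f x - Λ ⬝ᵥ (M *ᵥ x) + σ / 2 * ((M *ᵥ x + a) ⬝ᵥ (M *ᵥ x + a)))
      univ u) :
    IsSubgradient f u (Mᵀ *ᵥ (Λ - σ • (M *ᵥ u + a))) := by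
  intro s
  set r := M *ᵥ u + a
  set d := M *ᵥ (s - u)
  rw [dotProduct_comm, dotProduct_transpose_mulVec]
  suffices 0 ≤ f s - f u - (Λ - σ • r) ⬝ᵥ d by linarith
  refine nonneg_of_forall_mul_add_sq_mul_nonneg (K := σ / 2 * (d ⬝ᵥ d)) fun ε hε0 hε1 => ?_
  have hconv : f (u + ε • (s - u)) ≤ (1 - ε) * f u + ε * f s := by
    have hx : u + ε • (s - u) = (1 - ε) • u + ε • s := by module
    rw [hx]
    exact hf.2 (mem_univ u) (mem_univ s) (sub_nonneg.2 hε1) hε0.le (by ring)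
  have hMx : M *ᵥ (u + ε • (s - u)) = M *ᵥ u + ε • d := by
    rw [mulVec_add, mulVec_smul]
  have hmin : f u - Λ ⬝ᵥ (M *ᵥ u) + σ / 2 * (r ⬝ᵥ r) ≤ f (u + ε • (s - u))
      - Λ ⬝ᵥ (M *ᵥ u + ε • d) + σ / 2 * ((r + ε • d) ⬝ᵥ (r + ε • d)) := by
    rw [← hMx, show r + ε • d = M *ᵥ (u + ε • (s - u)) + a by rw [hMx, add_right_comm]]
    exact isMinOn_univ_iff.1 hu _
  simp only [dotProduct_add, add_dotProduct, dotProduct_smul, smul_dotProduct, smul_eq_mul,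
    sub_dotProduct, dotProduct_comm d r] at hmin ⊢
  linear_combination hmin + hconv

/- In the application `L = Λ^k - Λ*`, `r = Aθ^{k+1} + Bξ^{k+1}`, `e = B(ξ^{k+1} - ξ*)`,
`d = B(ξ^{k+1} - ξ^k)` and `r₀ = Aθ^k + Bξ^k`; then `r - e = A(θ^{k+1} - θ*)` by `Aθ* + Bξ* = 0`. -/
theorem admm_descent_of_monotone {σ μ : ℝ} (hσ : 0 < σ) (hμ : μ ∈ Ioc 0 1)
    (L r e d r₀ : ι → ℝ)
    (h_θ : 0 ≤ (L - σ • (r - d)) ⬝ᵥ (r - e))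
    (h_ξ : 0 ≤ (L - σ • r) ⬝ᵥ e)
    (h_step : 0 ≤ (σ • ((1 - μ) • r₀ - r)) ⬝ᵥ d) :
    (μ * σ)⁻¹ * ((L - (μ * σ) • r) ⬝ᵥ (L - (μ * σ) • r)) + σ * (e ⬝ᵥ e)
        + σ * (1 - μ) * (r ⬝ᵥ r)
      - ((μ * σ)⁻¹ * (L ⬝ᵥ L) + σ * ((e - d) ⬝ᵥ (e - d)) + σ * (1 - μ) * (r₀ ⬝ᵥ r₀))
      ≤ -σ * (r ⬝ᵥ r) - σ * μ * (d ⬝ᵥ d) := by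
  obtain ⟨hμ0, hμ1⟩ := hμ
  have hsq : 0 ≤ σ * (1 - μ) * ((r₀ - d) ⬝ᵥ (r₀ - d)) :=
    mul_nonneg (mul_nonneg hσ.le (sub_nonneg.2 hμ1))
      (by simpa using dotProduct_self_star_nonneg (r₀ - d))
  have hL : (μ * σ)⁻¹ * ((L - (μ * σ) • r) ⬝ᵥ (L - (μ * σ) • r))
      = (μ * σ)⁻¹ * (L ⬝ᵥ L) - 2 * (L ⬝ᵥ r) + μ * σ * (r ⬝ᵥ r) := by
    simp only [dotProduct_sub, sub_dotProduct, dotProduct_smul, smul_dotProduct, smul_eq_mul,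
      dotProduct_comm r L]
    field_simp
    ring
  rw [hL]
  simp only [dotProduct_sub, sub_dotProduct, smul_dotProduct, smul_eq_mul, dotProduct_comm d r,
    dotProduct_comm d e, dotProduct_comm d r₀] at h_θ h_ξ h_step hsq ⊢
  linear_combination 2 * h_θ + 2 * h_ξ + 2 * h_step + hsq

end

theorem stmt_11_general (n m q : ℕ) (σ μ : ℝ) (hσ : 0 < σ) (hμ : μ ∈ Set.Ioc (0:ℝ) 1)
    (A : Matrix (Fin n) (Fin m) ℝ) (B : Matrix (Fin n) (Fin q) ℝ)
    (y : Fin m → ℝ)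
    (g : (Fin q → ℝ) → ℝ)
    (hconv : ConvexOn ℝ Set.univ g)
    (θ : ℕ → Fin m → ℝ) (ξ : ℕ → Fin q → ℝ) (Λ : ℕ → Fin n → ℝ)
    -- θ-update: `θ^{k+1}` minimizes `⟨y,θ⟩ - ⟨Λ^k, Aθ⟩ + (σ/2)‖Aθ + Bξ^k‖²`
    (hθ : ∀ k, ∀ t : Fin m → ℝ,
      (∑ i, y i * θ (k+1) i) - (Λ k) ⬝ᵥ (A *ᵥ θ (k+1))
          + (σ/2) * ((A *ᵥ θ (k+1) + B *ᵥ ξ k) ⬝ᵥ (A *ᵥ θ (k+1) + B *ᵥ ξ k))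
        ≤ (∑ i, y i * t i) - (Λ k) ⬝ᵥ (A *ᵥ t)
          + (σ/2) * ((A *ᵥ t + B *ᵥ ξ k) ⬝ᵥ (A *ᵥ t + B *ᵥ ξ k)))
    -- ξ-update: `ξ^{k+1}` minimizes `g(ξ) - ⟨Λ^k, Bξ⟩ + (σ/2)‖Aθ^{k+1} + Bξ‖²`
    (hξ : ∀ k, ∀ s : Fin q → ℝ,
      g (ξ (k+1)) - (Λ k) ⬝ᵥ (B *ᵥ ξ (k+1))
          + (σ/2) * ((A *ᵥ θ (k+1) + B *ᵥ ξ (k+1)) ⬝ᵥ (A *ᵥ θ (k+1) + B *ᵥ ξ (k+1)))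
        ≤ g s - (Λ k) ⬝ᵥ (B *ᵥ s)
          + (σ/2) * ((A *ᵥ θ (k+1) + B *ᵥ s) ⬝ᵥ (A *ᵥ θ (k+1) + B *ᵥ s)))
    -- multiplier update
    (hΛ : ∀ k, Λ (k+1) = Λ k - (μ * σ) • (A *ᵥ θ (k+1) + B *ᵥ ξ (k+1)))
    -- KKT point
    (θs : Fin m → ℝ) (ξs : Fin q → ℝ) (Λs : Fin n → ℝ)
    (hk1 : A.transpose *ᵥ Λs = y)
    (hk2 : ∀ z : Fin q → ℝ,
      g ξs + ∑ j, (B.transpose *ᵥ Λs) j * (z j - ξs j) ≤ g z)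
    (hk3 : A *ᵥ θs + B *ᵥ ξs = 0) :
    ∀ k, 1 ≤ k →
      ((μ * σ)⁻¹ * ((Λ (k+1) - Λs) ⬝ᵥ (Λ (k+1) - Λs))
        + σ * ((B *ᵥ (ξ (k+1) - ξs)) ⬝ᵥ (B *ᵥ (ξ (k+1) - ξs)))
        + σ * (1 - μ) *
            ((A *ᵥ θ (k+1) + B *ᵥ ξ (k+1)) ⬝ᵥ (A *ᵥ θ (k+1) + B *ᵥ ξ (k+1))))
      - ((μ * σ)⁻¹ * ((Λ k - Λs) ⬝ᵥ (Λ k - Λs))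
        + σ * ((B *ᵥ (ξ k - ξs)) ⬝ᵥ (B *ᵥ (ξ k - ξs)))
        + σ * (1 - μ) * ((A *ᵥ θ k + B *ᵥ ξ k) ⬝ᵥ (A *ᵥ θ k + B *ᵥ ξ k)))
      ≤ - σ * ((A *ᵥ θ (k+1) + B *ᵥ ξ (k+1)) ⬝ᵥ (A *ᵥ θ (k+1) + B *ᵥ ξ (k+1)))
        - σ * μ * ((B *ᵥ (ξ (k+1) - ξ k)) ⬝ᵥ (B *ᵥ (ξ (k+1) - ξ k))) := by
  intro k hk
  obtain ⟨j, rfl⟩ := Nat.exists_eq_add_of_le' hk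
  have subgrad_ξ : ∀ i, IsSubgradient g (ξ (i + 1))
      (Bᵀ *ᵥ (Λ i - σ • (B *ᵥ ξ (i + 1) + A *ᵥ θ (i + 1)))) := fun i =>
    hconv.isSubgradient_of_isMinOn_augmented σ B (Λ i) (A *ᵥ θ (i + 1)) <|
      isMinOn_univ_iff.2 fun s => by simpa only [add_comm (A *ᵥ θ (i + 1))] using hξ i s
  have subgrad_θ : IsSubgradient (fun t => y ⬝ᵥ t) (θ (j + 1 + 1))
      (Aᵀ *ᵥ (Λ (j + 1) - σ • (A *ᵥ θ (j + 1 + 1) + B *ᵥ ξ (j + 1)))) :=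
    ((dotProductBilin ℝ ℝ y).convexOn convex_univ).isSubgradient_of_isMinOn_augmented σ A _ _
      (isMinOn_univ_iff.2 (hθ (j + 1)))
  have subgrad_θs : IsSubgradient (fun t => y ⬝ᵥ t) θs (Aᵀ *ᵥ Λs) :=
    hk1 ▸ isSubgradient_dotProduct y θs
  have h_θ := subgrad_θ.dotProduct_sub_nonneg subgrad_θs
  have h_ξ := (subgrad_ξ (j + 1)).dotProduct_sub_nonneg hk2
  have h_step := (subgrad_ξ (j + 1)).dotProduct_sub_nonneg (subgrad_ξ j)
  rw [← mulVec_sub, dotProduct_comm, dotProduct_transpose_mulVec] at h_θ h_ξ h_step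
  have hAθs : A *ᵥ θs = -(B *ᵥ ξs) := eq_neg_of_add_eq_zero_left hk3
  have hBξ : B *ᵥ (ξ (j + 1) - ξs)
      = B *ᵥ (ξ (j + 1 + 1) - ξs) - B *ᵥ (ξ (j + 1 + 1) - ξ (j + 1)) := by
    simp only [mulVec_sub]; abel
  rw [hΛ (j + 1), sub_right_comm, hBξ]
  refine admm_descent_of_monotone hσ hμ _ _ _ _ (A *ᵥ θ (j + 1) + B *ᵥ ξ (j + 1))
    (h_θ.trans_eq ?_) (h_ξ.trans_eq ?_) (h_step.trans_eq ?_)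
  · congr 1
    · rw [mulVec_sub]; module
    · rw [mulVec_sub, mulVec_sub, hAθs]; module
  · congr 1; module
  · congr 1; rw [hΛ j]; module

/-- One-step descent inequality for ADMM applied to
`min ⟨y,θ⟩ + g(ξ)` s.t. `Aθ + Bξ = 0`, with penalty `σ > 0` and step size
`μ ∈ (0,1]`, relative to a KKT point `(θ*, ξ*, Λ*)`. -/
theorem stmt_11 (n m q : ℕ) (σ μ : ℝ) (hσ : 0 < σ) (hμ : μ ∈ Set.Ioc (0:ℝ) 1)
    (A : Matrix (Fin n) (Fin m) ℝ) (B : Matrix (Fin n) (Fin q) ℝ)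
    (y : Fin m → ℝ)
    (g : (Fin q → ℝ) → ℝ)
    (hconv : ConvexOn ℝ Set.univ g) (hlsc : LowerSemicontinuous g)
    (θ : ℕ → Fin m → ℝ) (ξ : ℕ → Fin q → ℝ) (Λ : ℕ → Fin n → ℝ)
    -- θ-update: `θ^{k+1}` minimizes `⟨y,θ⟩ - ⟨Λ^k, Aθ⟩ + (σ/2)‖Aθ + Bξ^k‖²`
    (hθ : ∀ k, ∀ t : Fin m → ℝ,
      (∑ i, y i * θ (k+1) i) - (Λ k) ⬝ᵥ (A *ᵥ θ (k+1))
          + (σ/2) * ((A *ᵥ θ (k+1) + B *ᵥ ξ k) ⬝ᵥ (A *ᵥ θ (k+1) + B *ᵥ ξ k))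
        ≤ (∑ i, y i * t i) - (Λ k) ⬝ᵥ (A *ᵥ t)
          + (σ/2) * ((A *ᵥ t + B *ᵥ ξ k) ⬝ᵥ (A *ᵥ t + B *ᵥ ξ k)))
    -- ξ-update: `ξ^{k+1}` minimizes `g(ξ) - ⟨Λ^k, Bξ⟩ + (σ/2)‖Aθ^{k+1} + Bξ‖²`
    (hξ : ∀ k, ∀ s : Fin q → ℝ,
      g (ξ (k+1)) - (Λ k) ⬝ᵥ (B *ᵥ ξ (k+1))
          + (σ/2) * ((A *ᵥ θ (k+1) + B *ᵥ ξ (k+1)) ⬝ᵥ (A *ᵥ θ (k+1) + B *ᵥ ξ (k+1)))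
        ≤ g s - (Λ k) ⬝ᵥ (B *ᵥ s)
          + (σ/2) * ((A *ᵥ θ (k+1) + B *ᵥ s) ⬝ᵥ (A *ᵥ θ (k+1) + B *ᵥ s)))
    -- multiplier update
    (hΛ : ∀ k, Λ (k+1) = Λ k - (μ * σ) • (A *ᵥ θ (k+1) + B *ᵥ ξ (k+1)))
    -- KKT point
    (θs : Fin m → ℝ) (ξs : Fin q → ℝ) (Λs : Fin n → ℝ)
    (hk1 : A.transpose *ᵥ Λs = y)
    (hk2 : ∀ z : Fin q → ℝ,
      g ξs + ∑ j, (B.transpose *ᵥ Λs) j * (z j - ξs j) ≤ g z)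
    (hk3 : A *ᵥ θs + B *ᵥ ξs = 0) :
    ∀ k, 1 ≤ k →
      ((μ * σ)⁻¹ * ((Λ (k+1) - Λs) ⬝ᵥ (Λ (k+1) - Λs))
        + σ * ((B *ᵥ (ξ (k+1) - ξs)) ⬝ᵥ (B *ᵥ (ξ (k+1) - ξs)))
        + σ * (1 - μ) *
            ((A *ᵥ θ (k+1) + B *ᵥ ξ (k+1)) ⬝ᵥ (A *ᵥ θ (k+1) + B *ᵥ ξ (k+1))))
      - ((μ * σ)⁻¹ * ((Λ k - Λs) ⬝ᵥ (Λ k - Λs))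
        + σ * ((B *ᵥ (ξ k - ξs)) ⬝ᵥ (B *ᵥ (ξ k - ξs)))
        + σ * (1 - μ) * ((A *ᵥ θ k + B *ᵥ ξ k) ⬝ᵥ (A *ᵥ θ k + B *ᵥ ξ k)))
      ≤ - σ * ((A *ᵥ θ (k+1) + B *ᵥ ξ (k+1)) ⬝ᵥ (A *ᵥ θ (k+1) + B *ᵥ ξ (k+1)))
        - σ * μ * ((B *ᵥ (ξ (k+1) - ξ k)) ⬝ᵥ (B *ᵥ (ξ (k+1) - ξ k))) :=
  stmt_11_general n m q σ μ hσ hμ A B y g hconv θ ξ Λ hθ hξ hΛ θs ξs Λs hk1 hk2 hk3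
end

section
/- Under the setting of the previous ADMM scheme with A^T A and B^T B positive definite, for any step size μ ∈ (0, (1+√5)/2), the sequence c_k = (μσ)^{-1}‖Λ_e^k‖² + σ‖Bξ_e^k‖² + (1 − min{μ, μ^{-1}}) σ ‖Aθ^k + Bξ^k‖² is nonincreasing, and consequently ‖Aθ^{k+1}+Bξ^{k+1}‖ → 0, ‖B(ξ^{k+1}−ξ^k)‖ → 0, and ‖Λ^{k+1}−Λ^k‖ → 0 as k → ∞. -/
open Matrix Filter

private lemma admm_dp_nonneg {n : ℕ} (v : Fin n → ℝ) : 0 ≤ v ⬝ᵥ v :=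
  Finset.sum_nonneg fun _ _ => mul_self_nonneg _

private lemma admm_transfer {n m : ℕ} (M : Matrix (Fin n) (Fin m) ℝ)
    (w : Fin n → ℝ) (u : Fin m → ℝ) :
    w ⬝ᵥ (M *ᵥ u) = (M.transpose *ᵥ w) ⬝ᵥ u := by
  rw [Matrix.dotProduct_mulVec, Matrix.mulVec_transpose]

private lemma admm_dp_expand {n : ℕ} (u v : Fin n → ℝ) (s : ℝ) :
    (u + s • v) ⬝ᵥ (u + s • v) = u ⬝ᵥ u + 2*s*(v ⬝ᵥ u) + s^2 * (v ⬝ᵥ v) := by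
  simp [dotProduct_add, add_dotProduct, smul_dotProduct, dotProduct_smul,
    dotProduct_comm v u]
  ring

private lemma admm_quad_zero (a b : ℝ) (hb : 0 ≤ b)
    (h : ∀ s : ℝ, 0 ≤ a*s + b*s^2) : a = 0 := by
  have hb1 : (0:ℝ) < b + 1 := by linarith
  have h1 := h (-a/(b+1))
  have e : a * (-a/(b+1)) + b * (-a/(b+1)) ^ 2 = -a^2/(b+1)^2 := by
    field_simp; ring
  rw [e] at h1
  have h2 : a^2 ≤ 0 := by
    have := mul_le_mul_of_nonneg_right h1 (le_of_lt (pow_pos hb1 2))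
    simpa [div_mul_cancel₀, ne_of_gt (pow_pos hb1 2)] using this
  nlinarith [sq_nonneg a]

private lemma admm_eps_le (a b C : ℝ) (hC : 0 ≤ C)
    (h : ∀ t : ℝ, 0 < t → t ≤ 1 → a ≤ b + t*C) : a ≤ b := by
  by_contra h'
  push_neg at h'
  have ht : (0:ℝ) < min 1 ((a-b)/(2*(C+1))) :=
    lt_min one_pos (div_pos (by linarith) (by linarith))
  have h0 := h _ ht (min_le_left _ _)
  have h2 : min 1 ((a-b)/(2*(C+1))) ≤ (a-b)/(2*(C+1)) := min_le_right _ _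
  have h3 : min 1 ((a-b)/(2*(C+1))) * C ≤ (a-b)/(2*(C+1)) * C :=
    mul_le_mul_of_nonneg_right h2 hC
  have h4 : (a-b)/(2*(C+1)) * C < a - b := by
    rw [div_mul_eq_mul_div, div_lt_iff₀ (by linarith)]
    nlinarith
  linarith

private lemma admm_cauchy_le {n : ℕ} (t : ℝ) (ht : 0 < t) (u v : Fin n → ℝ) :
    2*(u ⬝ᵥ v) ≤ t*(u ⬝ᵥ u) + t⁻¹*(v ⬝ᵥ v) := by
  have h0 : 0 ≤ (t • u - v) ⬝ᵥ (t • u - v) := admm_dp_nonneg _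
  have e : (t • u - v) ⬝ᵥ (t • u - v)
      = t^2*(u ⬝ᵥ u) - 2*t*(u ⬝ᵥ v) + v ⬝ᵥ v := by
    simp [dotProduct_sub, sub_dotProduct, smul_dotProduct, dotProduct_smul,
      dotProduct_comm v u]
    ring
  rw [e] at h0
  have h3 : t*(t⁻¹*(v ⬝ᵥ v)) = v ⬝ᵥ v := by
    rw [← mul_assoc, mul_inv_cancel₀ ht.ne', one_mul]
  have h2 : t*(2*(u ⬝ᵥ v)) ≤ t*(t*(u ⬝ᵥ u) + t⁻¹*(v ⬝ᵥ v)) := by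
    rw [mul_add, h3]; nlinarith
  exact le_of_mul_le_mul_left h2 ht

private lemma admm_cauchy_ge {n : ℕ} (t : ℝ) (ht : 0 < t) (u v : Fin n → ℝ) :
    -(t*(u ⬝ᵥ u) + t⁻¹*(v ⬝ᵥ v)) ≤ 2*(u ⬝ᵥ v) := by
  have h0 : 0 ≤ (t • u + v) ⬝ᵥ (t • u + v) := admm_dp_nonneg _
  have e : (t • u + v) ⬝ᵥ (t • u + v)
      = t^2*(u ⬝ᵥ u) + 2*t*(u ⬝ᵥ v) + v ⬝ᵥ v := by
    simp [dotProduct_add, add_dotProduct, smul_dotProduct, dotProduct_smul,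
      dotProduct_comm v u]
    ring
  rw [e] at h0
  have h3 : t*(t⁻¹*(v ⬝ᵥ v)) = v ⬝ᵥ v := by
    rw [← mul_assoc, mul_inv_cancel₀ ht.ne', one_mul]
  have h2 : t*(-(t*(u ⬝ᵥ u) + t⁻¹*(v ⬝ᵥ v))) ≤ t*(2*(u ⬝ᵥ v)) := by
    rw [mul_neg, mul_add, h3]; nlinarith
  exact le_of_mul_le_mul_left h2 ht

/-- Monotone Lyapunov sequence and vanishing residuals for ADMM applied to
`min ⟨y,θ⟩ + g(ξ)` s.t. `Aθ + Bξ = 0` with `AᵀA`, `BᵀB` positive definite and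
step size `μ ∈ (0, (1+√5)/2)`:
`c_k = (μσ)⁻¹‖Λ_e^k‖² + σ‖Bξ_e^k‖² + (1 - min{μ,μ⁻¹})σ‖Aθ^k + Bξ^k‖²`
is nonincreasing, and `‖Aθ^{k+1}+Bξ^{k+1}‖ → 0`, `‖B(ξ^{k+1}-ξ^k)‖ → 0`,
`‖Λ^{k+1}-Λ^k‖ → 0`. -/
theorem stmt_12 (n m q : ℕ) (σ μ : ℝ) (hσ : 0 < σ)
    (hμ : μ ∈ Set.Ioo (0:ℝ) ((1 + Real.sqrt 5) / 2))
    (A : Matrix (Fin n) (Fin m) ℝ) (B : Matrix (Fin n) (Fin q) ℝ)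
    (hAtA : (A.transpose * A).PosDef) (hBtB : (B.transpose * B).PosDef)
    (y : Fin m → ℝ)
    (g : (Fin q → ℝ) → ℝ)
    (hconv : ConvexOn ℝ Set.univ g) (hlsc : LowerSemicontinuous g)
    (θ : ℕ → Fin m → ℝ) (ξ : ℕ → Fin q → ℝ) (Λ : ℕ → Fin n → ℝ)
    (hθ : ∀ k, ∀ t : Fin m → ℝ,
      (∑ i, y i * θ (k+1) i) - (Λ k) ⬝ᵥ (A *ᵥ θ (k+1))
          + (σ/2) * ((A *ᵥ θ (k+1) + B *ᵥ ξ k) ⬝ᵥ (A *ᵥ θ (k+1) + B *ᵥ ξ k))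
        ≤ (∑ i, y i * t i) - (Λ k) ⬝ᵥ (A *ᵥ t)
          + (σ/2) * ((A *ᵥ t + B *ᵥ ξ k) ⬝ᵥ (A *ᵥ t + B *ᵥ ξ k)))
    (hξ : ∀ k, ∀ s : Fin q → ℝ,
      g (ξ (k+1)) - (Λ k) ⬝ᵥ (B *ᵥ ξ (k+1))
          + (σ/2) * ((A *ᵥ θ (k+1) + B *ᵥ ξ (k+1)) ⬝ᵥ (A *ᵥ θ (k+1) + B *ᵥ ξ (k+1)))
        ≤ g s - (Λ k) ⬝ᵥ (B *ᵥ s)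
          + (σ/2) * ((A *ᵥ θ (k+1) + B *ᵥ s) ⬝ᵥ (A *ᵥ θ (k+1) + B *ᵥ s)))
    (hΛ : ∀ k, Λ (k+1) = Λ k - (μ * σ) • (A *ᵥ θ (k+1) + B *ᵥ ξ (k+1)))
    -- KKT point
    (θs : Fin m → ℝ) (ξs : Fin q → ℝ) (Λs : Fin n → ℝ)
    (hk1 : A.transpose *ᵥ Λs = y)
    (hk2 : ∀ z : Fin q → ℝ,
      g ξs + ∑ j, (B.transpose *ᵥ Λs) j * (z j - ξs j) ≤ g z)
    (hk3 : A *ᵥ θs + B *ᵥ ξs = 0)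
    -- the Lyapunov sequence
    (c : ℕ → ℝ)
    (hc : ∀ k, c k =
      (μ * σ)⁻¹ * ((Λ k - Λs) ⬝ᵥ (Λ k - Λs))
        + σ * ((B *ᵥ (ξ k - ξs)) ⬝ᵥ (B *ᵥ (ξ k - ξs)))
        + (1 - min μ μ⁻¹) * σ *
            ((A *ᵥ θ k + B *ᵥ ξ k) ⬝ᵥ (A *ᵥ θ k + B *ᵥ ξ k))) :
    (∀ k, 1 ≤ k → c (k+1) ≤ c k) ∧
    Tendsto (fun k => Real.sqrt
        ((A *ᵥ θ (k+1) + B *ᵥ ξ (k+1)) ⬝ᵥ (A *ᵥ θ (k+1) + B *ᵥ ξ (k+1))))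
      atTop (nhds 0) ∧
    Tendsto (fun k => Real.sqrt
        ((B *ᵥ (ξ (k+1) - ξ k)) ⬝ᵥ (B *ᵥ (ξ (k+1) - ξ k)))) atTop (nhds 0) ∧
    Tendsto (fun k => Real.sqrt
        ((Λ (k+1) - Λ k) ⬝ᵥ (Λ (k+1) - Λ k))) atTop (nhds 0) := by
  obtain ⟨hμ0, hμφ⟩ := hμ
  have hμσ : 0 < μ * σ := mul_pos hμ0 hσ
  have hgold : μ^2 < μ + 1 := by
    have h5 : Real.sqrt 5 ^ 2 = 5 := Real.sq_sqrt (by norm_num)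
    nlinarith [Real.sqrt_nonneg 5, sq_nonneg (2*μ - 1 - Real.sqrt 5)]
  -- gradient identity from the θ-minimization step
  have hE1 : ∀ k, A.transpose *ᵥ (Λ k - σ • (A *ᵥ θ (k+1) + B *ᵥ ξ k)) = y := by
    intro k
    have key : ∀ v : Fin m → ℝ,
        y ⬝ᵥ v - (A.transpose *ᵥ (Λ k - σ • (A *ᵥ θ (k+1) + B *ᵥ ξ k))) ⬝ᵥ v = 0 := by
      intro v
      have hquad : ∀ s : ℝ, 0 ≤ (y ⬝ᵥ v - (Λ k) ⬝ᵥ (A *ᵥ v)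
          + σ * ((A *ᵥ v) ⬝ᵥ (A *ᵥ θ (k+1) + B *ᵥ ξ k))) * s
          + (σ/2 * ((A *ᵥ v) ⬝ᵥ (A *ᵥ v))) * s^2 := by
        intro s
        have h := hθ k (θ (k+1) + s • v)
        have e1 : (∑ i, y i * (θ (k+1) + s • v) i)
            = (∑ i, y i * θ (k+1) i) + s * (y ⬝ᵥ v) := by
          show y ⬝ᵥ (θ (k+1) + s • v) = y ⬝ᵥ θ (k+1) + s * (y ⬝ᵥ v)
          rw [dotProduct_add, dotProduct_smul, smul_eq_mul]
        have e2 : A *ᵥ (θ (k+1) + s • v) = A *ᵥ θ (k+1) + s • (A *ᵥ v) := by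
          rw [Matrix.mulVec_add, Matrix.mulVec_smul]
        have e4 : (∑ i, y i * (θ (k+1) + s • v) i)
            - (Λ k) ⬝ᵥ (A *ᵥ (θ (k+1) + s • v))
            + (σ/2) * ((A *ᵥ (θ (k+1) + s • v) + B *ᵥ ξ k)
                ⬝ᵥ (A *ᵥ (θ (k+1) + s • v) + B *ᵥ ξ k))
            = ((∑ i, y i * θ (k+1) i) - (Λ k) ⬝ᵥ (A *ᵥ θ (k+1))
              + (σ/2) * ((A *ᵥ θ (k+1) + B *ᵥ ξ k) ⬝ᵥ (A *ᵥ θ (k+1) + B *ᵥ ξ k)))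
              + ((y ⬝ᵥ v - (Λ k) ⬝ᵥ (A *ᵥ v)
                  + σ * ((A *ᵥ v) ⬝ᵥ (A *ᵥ θ (k+1) + B *ᵥ ξ k))) * s
                + (σ/2 * ((A *ᵥ v) ⬝ᵥ (A *ᵥ v))) * s^2) := by
          rw [e1, e2, dotProduct_add, dotProduct_smul,
            add_right_comm (A *ᵥ θ (k+1)) (s • (A *ᵥ v)) (B *ᵥ ξ k),
            admm_dp_expand, smul_eq_mul]
          ring
        linarith [h, e4]
      have ha := admm_quad_zero _ _
        (mul_nonneg (by linarith) (admm_dp_nonneg (A *ᵥ v))) hquad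
      have eb : (A.transpose *ᵥ (Λ k - σ • (A *ᵥ θ (k+1) + B *ᵥ ξ k))) ⬝ᵥ v
          = (Λ k) ⬝ᵥ (A *ᵥ v) - σ * ((A *ᵥ v) ⬝ᵥ (A *ᵥ θ (k+1) + B *ᵥ ξ k)) := by
        rw [← admm_transfer, sub_dotProduct, smul_dotProduct, smul_eq_mul,
          dotProduct_comm (A *ᵥ v)]
      rw [eb]
      linarith [ha]
    have hv := key (y - A.transpose *ᵥ (Λ k - σ • (A *ᵥ θ (k+1) + B *ᵥ ξ k)))
    rw [← sub_dotProduct] at hv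
    have := dotProduct_self_eq_zero.mp hv
    have := sub_eq_zero.mp this
    exact this.symm
  -- subgradient inequality from the ξ-minimization step
  have hsub : ∀ k, ∀ z : Fin q → ℝ,
      g (ξ (k+1)) + ((Λ k - σ • (A *ᵥ θ (k+1) + B *ᵥ ξ (k+1)))
        ⬝ᵥ (B *ᵥ (z - ξ (k+1)))) ≤ g z := by
    intro k z
    apply admm_eps_le _ _ ((σ/2) * ((B *ᵥ (z - ξ (k+1))) ⬝ᵥ (B *ᵥ (z - ξ (k+1)))))
      (mul_nonneg (by linarith) (admm_dp_nonneg _))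
    intro t ht0 ht1
    have h := hξ k (ξ (k+1) + t • (z - ξ (k+1)))
    have e2 : B *ᵥ (ξ (k+1) + t • (z - ξ (k+1)))
        = B *ᵥ ξ (k+1) + t • (B *ᵥ (z - ξ (k+1))) := by
      rw [Matrix.mulVec_add, Matrix.mulVec_smul]
    have e4 : g (ξ (k+1) + t • (z - ξ (k+1)))
        - (Λ k) ⬝ᵥ (B *ᵥ (ξ (k+1) + t • (z - ξ (k+1))))
        + (σ/2) * ((A *ᵥ θ (k+1) + B *ᵥ (ξ (k+1) + t • (z - ξ (k+1))))
            ⬝ᵥ (A *ᵥ θ (k+1) + B *ᵥ (ξ (k+1) + t • (z - ξ (k+1)))))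
        = (g (ξ (k+1) + t • (z - ξ (k+1))) - (Λ k) ⬝ᵥ (B *ᵥ ξ (k+1))
            + (σ/2) * ((A *ᵥ θ (k+1) + B *ᵥ ξ (k+1))
                ⬝ᵥ (A *ᵥ θ (k+1) + B *ᵥ ξ (k+1))))
          + (- (t * ((Λ k) ⬝ᵥ (B *ᵥ (z - ξ (k+1)))))
            + σ * (t * ((B *ᵥ (z - ξ (k+1))) ⬝ᵥ (A *ᵥ θ (k+1) + B *ᵥ ξ (k+1))))
            + (σ/2) * (t^2 * ((B *ᵥ (z - ξ (k+1))) ⬝ᵥ (B *ᵥ (z - ξ (k+1)))))) := by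
      rw [e2, dotProduct_add, dotProduct_smul,
        ← add_assoc (A *ᵥ θ (k+1)) (B *ᵥ ξ (k+1)) (t • (B *ᵥ (z - ξ (k+1)))),
        admm_dp_expand, smul_eq_mul]
      ring
    have cv : g (ξ (k+1) + t • (z - ξ (k+1)))
        ≤ (1-t) * g (ξ (k+1)) + t * g z := by
      have hmem : (ξ (k+1)) ∈ (Set.univ : Set (Fin q → ℝ)) := Set.mem_univ _
      have hmem2 : z ∈ (Set.univ : Set (Fin q → ℝ)) := Set.mem_univ _
      have := hconv.2 hmem hmem2 (by linarith : (0:ℝ) ≤ 1 - t) ht0.le (by ring)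
      have e3 : (1-t) • ξ (k+1) + t • z = ξ (k+1) + t • (z - ξ (k+1)) := by
        rw [sub_smul, one_smul, smul_sub]; abel
      rwa [e3] at this
    -- combine and divide by t
    have hX : 0 ≤ t * (g z - g (ξ (k+1)) - (Λ k) ⬝ᵥ (B *ᵥ (z - ξ (k+1)))
        + σ * ((B *ᵥ (z - ξ (k+1))) ⬝ᵥ (A *ᵥ θ (k+1) + B *ᵥ ξ (k+1)))
        + t * ((σ/2) * ((B *ᵥ (z - ξ (k+1))) ⬝ᵥ (B *ᵥ (z - ξ (k+1)))))) := by
      nlinarith [h, cv, e4]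
    have hX' := (mul_nonneg_iff_of_pos_left ht0).mp hX
    have eb : (Λ k - σ • (A *ᵥ θ (k+1) + B *ᵥ ξ (k+1))) ⬝ᵥ (B *ᵥ (z - ξ (k+1)))
        = (Λ k) ⬝ᵥ (B *ᵥ (z - ξ (k+1)))
          - σ * ((B *ᵥ (z - ξ (k+1))) ⬝ᵥ (A *ᵥ θ (k+1) + B *ᵥ ξ (k+1))) := by
      rw [sub_dotProduct, smul_dotProduct, smul_eq_mul,
        dotProduct_comm (B *ᵥ (z - ξ (k+1)))]
    rw [eb]
    linarith [hX']
  -- KKT subgradient inequality in dot-product form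
  have hk2' : ∀ z : Fin q → ℝ, g ξs + Λs ⬝ᵥ (B *ᵥ (z - ξs)) ≤ g z := by
    intro z
    have h := hk2 z
    have e : (∑ j, (B.transpose *ᵥ Λs) j * (z j - ξs j))
        = (B.transpose *ᵥ Λs) ⬝ᵥ (z - ξs) := rfl
    rw [e] at h
    rwa [admm_transfer]
  -- the key variational inequality at step k
  have hstar : ∀ k, 0 ≤ (Λ k - Λs) ⬝ᵥ (A *ᵥ θ (k+1) + B *ᵥ ξ (k+1))
      - σ * ((A *ᵥ θ (k+1) + B *ᵥ ξ (k+1)) ⬝ᵥ (A *ᵥ θ (k+1) + B *ᵥ ξ (k+1)))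
      + σ * ((B *ᵥ (ξ (k+1) - ξ k)) ⬝ᵥ (A *ᵥ θ (k+1) + B *ᵥ ξ (k+1)))
      - σ * ((B *ᵥ (ξ (k+1) - ξ k)) ⬝ᵥ (B *ᵥ (ξ (k+1) - ξs))) := by
    intro k
    have h1 := hsub k ξs
    have hneg : ξs - ξ (k+1) = -(ξ (k+1) - ξs) := (neg_sub _ _).symm
    rw [hneg, Matrix.mulVec_neg, dotProduct_neg] at h1
    have h2 := hk2' (ξ (k+1))
    have hA0 : A.transpose *ᵥ (Λ k - σ • (A *ᵥ θ (k+1) + B *ᵥ ξ k) - Λs) = 0 := by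
      rw [Matrix.mulVec_sub, hE1 k, hk1, sub_self]
    have hE3 : (Λ k - σ • (A *ᵥ θ (k+1) + B *ᵥ ξ k) - Λs)
        ⬝ᵥ (A *ᵥ (θ (k+1) - θs)) = 0 := by
      rw [admm_transfer, hA0, zero_dotProduct]
    have hresid : A *ᵥ θ (k+1) + B *ᵥ ξ k
        = (A *ᵥ θ (k+1) + B *ᵥ ξ (k+1)) - B *ᵥ (ξ (k+1) - ξ k) := by
      rw [Matrix.mulVec_sub]; abel
    have hAe : A *ᵥ (θ (k+1) - θs)
        = (A *ᵥ θ (k+1) + B *ᵥ ξ (k+1)) - B *ᵥ (ξ (k+1) - ξs) := by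
      have h0 : A *ᵥ θs = -(B *ᵥ ξs) := eq_neg_of_add_eq_zero_left hk3
      rw [Matrix.mulVec_sub, Matrix.mulVec_sub, h0]; abel
    rw [hresid, hAe] at hE3
    simp only [smul_sub, sub_dotProduct, dotProduct_sub, smul_dotProduct,
      smul_eq_mul] at hE3 h1 ⊢
    linarith [h1, h2, hE3]
  -- monotonicity of the subdifferential between consecutive steps
  have hmono : ∀ j : ℕ,
      σ * ((A *ᵥ θ (j+2) + B *ᵥ ξ (j+2)) ⬝ᵥ (B *ᵥ (ξ (j+2) - ξ (j+1))))
        ≤ (1-μ) * σ * ((A *ᵥ θ (j+1) + B *ᵥ ξ (j+1)) ⬝ᵥ (B *ᵥ (ξ (j+2) - ξ (j+1)))) := by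
    intro j
    have h1 := hsub (j+1) (ξ (j+1))
    have hneg : ξ (j+1) - ξ (j+1+1) = -(ξ (j+2) - ξ (j+1)) := (neg_sub _ _).symm
    rw [hneg, Matrix.mulVec_neg, dotProduct_neg] at h1
    have h2 := hsub j (ξ (j+2))
    rw [hΛ j] at h1
    simp only [sub_dotProduct, smul_dotProduct, smul_eq_mul] at h1 h2
    linarith [h1, h2]
  -- exact expression for the decrease of c
  have hcdiff : ∀ k, c k - c (k+1)
      = 2*((Λ k - Λs) ⬝ᵥ (A *ᵥ θ (k+1) + B *ᵥ ξ (k+1)))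
        - μ*σ*((A *ᵥ θ (k+1) + B *ᵥ ξ (k+1)) ⬝ᵥ (A *ᵥ θ (k+1) + B *ᵥ ξ (k+1)))
        - 2*σ*((B *ᵥ (ξ (k+1) - ξ k)) ⬝ᵥ (B *ᵥ (ξ k - ξs)))
        - σ*((B *ᵥ (ξ (k+1) - ξ k)) ⬝ᵥ (B *ᵥ (ξ (k+1) - ξ k)))
        + (1 - min μ μ⁻¹)*σ*((A *ᵥ θ k + B *ᵥ ξ k) ⬝ᵥ (A *ᵥ θ k + B *ᵥ ξ k)
            - (A *ᵥ θ (k+1) + B *ᵥ ξ (k+1)) ⬝ᵥ (A *ᵥ θ (k+1) + B *ᵥ ξ (k+1))) := by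
    intro k
    have hΛe : Λ (k+1) - Λs = (Λ k - Λs)
        + (-(μ*σ)) • (A *ᵥ θ (k+1) + B *ᵥ ξ (k+1)) := by
      rw [hΛ k, neg_smul]; abel
    have hBe : B *ᵥ (ξ (k+1) - ξs)
        = B *ᵥ (ξ k - ξs) + (1:ℝ) • (B *ᵥ (ξ (k+1) - ξ k)) := by
      rw [one_smul, ← Matrix.mulVec_add]
      congr 1
      abel
    rw [hc k, hc (k+1), hΛe, admm_dp_expand, hBe, admm_dp_expand,
      dotProduct_comm (A *ᵥ θ (k+1) + B *ᵥ ξ (k+1)) (Λ k - Λs),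
      dotProduct_comm (B *ᵥ (ξ (k+1) - ξ k)) (B *ᵥ (ξ k - ξs))]
    field_simp
    ring
  -- positivity of the step-size constants
  have hα2pos : (0:ℝ) < 1 - μ + μ⁻¹ := by
    have e : 1 - μ + μ⁻¹ = (μ + 1 - μ^2)/μ := by field_simp; ring
    rw [e]
    exact div_pos (by linarith) hμ0
  have hαpos : (0:ℝ) < min 1 (1 - μ + μ⁻¹) := lt_min one_pos hα2pos
  have hβpos : (0:ℝ) < min μ (1 + μ - μ^2) := lt_min hμ0 (by nlinarith)
  -- key one-step decrease
  have hkey : ∀ j : ℕ,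
      (min 1 (1 - μ + μ⁻¹)) * σ *
          ((A *ᵥ θ (j+2) + B *ᵥ ξ (j+2)) ⬝ᵥ (A *ᵥ θ (j+2) + B *ᵥ ξ (j+2)))
        + (min μ (1 + μ - μ^2)) * σ *
          ((B *ᵥ (ξ (j+2) - ξ (j+1))) ⬝ᵥ (B *ᵥ (ξ (j+2) - ξ (j+1))))
      ≤ c (j+1) - c (j+2) := by
    intro j
    have hst := hstar (j+1)
    have hmn := hmono j
    have hcd := hcdiff (j+1)
    have hW : (B *ᵥ (ξ (j+2) - ξ (j+1))) ⬝ᵥ (B *ᵥ (ξ (j+1+1) - ξs))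
        = (B *ᵥ (ξ (j+2) - ξ (j+1))) ⬝ᵥ (B *ᵥ (ξ (j+1) - ξs))
          + (B *ᵥ (ξ (j+2) - ξ (j+1))) ⬝ᵥ (B *ᵥ (ξ (j+2) - ξ (j+1))) := by
      have e : ξ (j+1+1) - ξs = (ξ (j+1) - ξs) + (ξ (j+2) - ξ (j+1)) := by abel
      rw [e, Matrix.mulVec_add, dotProduct_add]
    rw [hW] at hst
    simp only [show j+1+1 = j+2 from rfl] at hst hcd
    have hC1 : (B *ᵥ (ξ (j+2) - ξ (j+1))) ⬝ᵥ (A *ᵥ θ (j+2) + B *ᵥ ξ (j+2))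
        = (A *ᵥ θ (j+2) + B *ᵥ ξ (j+2)) ⬝ᵥ (B *ᵥ (ξ (j+2) - ξ (j+1))) :=
      dotProduct_comm _ _
    have hR1n := admm_dp_nonneg (A *ᵥ θ (j+2) + B *ᵥ ξ (j+2))
    have hR0n := admm_dp_nonneg (A *ᵥ θ (j+1) + B *ᵥ ξ (j+1))
    have hDn := admm_dp_nonneg (B *ᵥ (ξ (j+2) - ξ (j+1)))
    rcases le_or_gt μ 1 with hm | hm
    · -- case 0 < μ ≤ 1
      have hmin : min μ μ⁻¹ = μ := min_eq_left (le_trans hm ((one_le_inv₀ hμ0).mpr hm))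
      rw [hmin] at hcd
      have hcs1 : 2*((A *ᵥ θ (j+1) + B *ᵥ ξ (j+1)) ⬝ᵥ (B *ᵥ (ξ (j+2) - ξ (j+1))))
          ≤ (A *ᵥ θ (j+1) + B *ᵥ ξ (j+1)) ⬝ᵥ (A *ᵥ θ (j+1) + B *ᵥ ξ (j+1))
            + (B *ᵥ (ξ (j+2) - ξ (j+1))) ⬝ᵥ (B *ᵥ (ξ (j+2) - ξ (j+1))) := by
        simpa using admm_cauchy_le 1 one_pos
          (A *ᵥ θ (j+1) + B *ᵥ ξ (j+1)) (B *ᵥ (ξ (j+2) - ξ (j+1)))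
      have hp1 : 0 ≤ (1 - min 1 (1 - μ + μ⁻¹)) *
          (σ * ((A *ᵥ θ (j+2) + B *ᵥ ξ (j+2)) ⬝ᵥ (A *ᵥ θ (j+2) + B *ᵥ ξ (j+2)))) :=
        mul_nonneg (by linarith [min_le_left (1:ℝ) (1 - μ + μ⁻¹)])
          (mul_nonneg hσ.le hR1n)
      have hp2 : 0 ≤ (μ - min μ (1 + μ - μ^2)) *
          (σ * ((B *ᵥ (ξ (j+2) - ξ (j+1))) ⬝ᵥ (B *ᵥ (ξ (j+2) - ξ (j+1))))) :=
        mul_nonneg (by linarith [min_le_left μ (1 + μ - μ^2)])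
          (mul_nonneg hσ.le hDn)
      have hp3 : (1-μ)*σ*(2*((A *ᵥ θ (j+1) + B *ᵥ ξ (j+1)) ⬝ᵥ (B *ᵥ (ξ (j+2) - ξ (j+1)))))
          ≤ (1-μ)*σ*((A *ᵥ θ (j+1) + B *ᵥ ξ (j+1)) ⬝ᵥ (A *ᵥ θ (j+1) + B *ᵥ ξ (j+1))
            + (B *ᵥ (ξ (j+2) - ξ (j+1))) ⬝ᵥ (B *ᵥ (ξ (j+2) - ξ (j+1)))) :=
        mul_le_mul_of_nonneg_left hcs1 (mul_nonneg (by linarith) hσ.le)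
      set R1 := (A *ᵥ θ (j+2) + B *ᵥ ξ (j+2)) ⬝ᵥ (A *ᵥ θ (j+2) + B *ᵥ ξ (j+2)) with hsR1
      set R0 := (A *ᵥ θ (j+1) + B *ᵥ ξ (j+1)) ⬝ᵥ (A *ᵥ θ (j+1) + B *ᵥ ξ (j+1)) with hsR0
      set D := (B *ᵥ (ξ (j+2) - ξ (j+1))) ⬝ᵥ (B *ᵥ (ξ (j+2) - ξ (j+1))) with hsD
      set P := (Λ (j+1) - Λs) ⬝ᵥ (A *ᵥ θ (j+2) + B *ᵥ ξ (j+2)) with hsP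
      set X := (B *ᵥ (ξ (j+2) - ξ (j+1))) ⬝ᵥ (B *ᵥ (ξ (j+1) - ξs)) with hsX
      set Y := (B *ᵥ (ξ (j+2) - ξ (j+1))) ⬝ᵥ (A *ᵥ θ (j+2) + B *ᵥ ξ (j+2)) with hsY
      set Z2 := (A *ᵥ θ (j+2) + B *ᵥ ξ (j+2)) ⬝ᵥ (B *ᵥ (ξ (j+2) - ξ (j+1))) with hsZ2
      set Z1 := (A *ᵥ θ (j+1) + B *ᵥ ξ (j+1)) ⬝ᵥ (B *ᵥ (ξ (j+2) - ξ (j+1))) with hsZ1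
      rw [hC1] at hst
      linarith [hcd, hst, hmn, hp1, hp2, hp3]
    · -- case 1 < μ
      have hmin : min μ μ⁻¹ = μ⁻¹ :=
        min_eq_right (le_trans (inv_le_one_of_one_le₀ hm.le) hm.le)
      rw [hmin] at hcd
      have hμinv : μ * μ⁻¹ = 1 := mul_inv_cancel₀ hμ0.ne'
      have hcs2 : -(μ⁻¹ * ((A *ᵥ θ (j+1) + B *ᵥ ξ (j+1)) ⬝ᵥ (A *ᵥ θ (j+1) + B *ᵥ ξ (j+1)))
            + μ * ((B *ᵥ (ξ (j+2) - ξ (j+1))) ⬝ᵥ (B *ᵥ (ξ (j+2) - ξ (j+1)))))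
          ≤ 2*((A *ᵥ θ (j+1) + B *ᵥ ξ (j+1)) ⬝ᵥ (B *ᵥ (ξ (j+2) - ξ (j+1)))) := by
        have := admm_cauchy_ge μ⁻¹ (inv_pos.mpr hμ0)
          (A *ᵥ θ (j+1) + B *ᵥ ξ (j+1)) (B *ᵥ (ξ (j+2) - ξ (j+1)))
        rwa [inv_inv] at this
      have hp1 : 0 ≤ ((1 - μ + μ⁻¹) - min 1 (1 - μ + μ⁻¹)) *
          (σ * ((A *ᵥ θ (j+2) + B *ᵥ ξ (j+2)) ⬝ᵥ (A *ᵥ θ (j+2) + B *ᵥ ξ (j+2)))) :=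
        mul_nonneg (by linarith [min_le_right (1:ℝ) (1 - μ + μ⁻¹)])
          (mul_nonneg hσ.le hR1n)
      have hp2 : 0 ≤ ((1 + μ - μ^2) - min μ (1 + μ - μ^2)) *
          (σ * ((B *ᵥ (ξ (j+2) - ξ (j+1))) ⬝ᵥ (B *ᵥ (ξ (j+2) - ξ (j+1))))) :=
        mul_nonneg (by linarith [min_le_right μ (1 + μ - μ^2)])
          (mul_nonneg hσ.le hDn)
      have hp3 : (μ-1)*σ*(-(μ⁻¹ * ((A *ᵥ θ (j+1) + B *ᵥ ξ (j+1)) ⬝ᵥ (A *ᵥ θ (j+1) + B *ᵥ ξ (j+1)))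
            + μ * ((B *ᵥ (ξ (j+2) - ξ (j+1))) ⬝ᵥ (B *ᵥ (ξ (j+2) - ξ (j+1))))))
          ≤ (μ-1)*σ*(2*((A *ᵥ θ (j+1) + B *ᵥ ξ (j+1)) ⬝ᵥ (B *ᵥ (ξ (j+2) - ξ (j+1))))) :=
        mul_le_mul_of_nonneg_left hcs2 (mul_nonneg (by linarith) hσ.le)
      set R1 := (A *ᵥ θ (j+2) + B *ᵥ ξ (j+2)) ⬝ᵥ (A *ᵥ θ (j+2) + B *ᵥ ξ (j+2)) with hsR1
      set R0 := (A *ᵥ θ (j+1) + B *ᵥ ξ (j+1)) ⬝ᵥ (A *ᵥ θ (j+1) + B *ᵥ ξ (j+1)) with hsR0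
      set D := (B *ᵥ (ξ (j+2) - ξ (j+1))) ⬝ᵥ (B *ᵥ (ξ (j+2) - ξ (j+1))) with hsD
      set P := (Λ (j+1) - Λs) ⬝ᵥ (A *ᵥ θ (j+2) + B *ᵥ ξ (j+2)) with hsP
      set X := (B *ᵥ (ξ (j+2) - ξ (j+1))) ⬝ᵥ (B *ᵥ (ξ (j+1) - ξs)) with hsX
      set Y := (B *ᵥ (ξ (j+2) - ξ (j+1))) ⬝ᵥ (A *ᵥ θ (j+2) + B *ᵥ ξ (j+2)) with hsY
      set Z2 := (A *ᵥ θ (j+2) + B *ᵥ ξ (j+2)) ⬝ᵥ (B *ᵥ (ξ (j+2) - ξ (j+1))) with hsZ2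
      set Z1 := (A *ᵥ θ (j+1) + B *ᵥ ξ (j+1)) ⬝ᵥ (B *ᵥ (ξ (j+2) - ξ (j+1))) with hsZ1
      rw [hC1] at hst
      have hid1 : (μ*μ⁻¹)*(σ*((A *ᵥ θ (j+1) + B *ᵥ ξ (j+1)) ⬝ᵥ (A *ᵥ θ (j+1) + B *ᵥ ξ (j+1))))
          = σ*((A *ᵥ θ (j+1) + B *ᵥ ξ (j+1)) ⬝ᵥ (A *ᵥ θ (j+1) + B *ᵥ ξ (j+1))) := by
        rw [hμinv, one_mul]
      have hid2 : (μ*μ⁻¹)*(σ*((A *ᵥ θ (j+2) + B *ᵥ ξ (j+2)) ⬝ᵥ (A *ᵥ θ (j+2) + B *ᵥ ξ (j+2))))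
          = σ*((A *ᵥ θ (j+2) + B *ᵥ ξ (j+2)) ⬝ᵥ (A *ᵥ θ (j+2) + B *ᵥ ξ (j+2))) := by
        rw [hμinv, one_mul]
      linarith [hcd, hst, hmn, hp1, hp2, hp3, hid1, hid2]
  -- c is nonnegative
  have hmle1 : min μ μ⁻¹ ≤ 1 := by
    rcases le_total μ 1 with h | h
    · exact le_trans (min_le_left _ _) h
    · exact le_trans (min_le_right _ _) (inv_le_one_of_one_le₀ h)
  have hc0 : ∀ k, 0 ≤ c k := by
    intro k
    rw [hc k]
    have t1 : 0 ≤ (μ * σ)⁻¹ * ((Λ k - Λs) ⬝ᵥ (Λ k - Λs)) :=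
      mul_nonneg (inv_nonneg.mpr hμσ.le) (admm_dp_nonneg _)
    have t2 : 0 ≤ σ * ((B *ᵥ (ξ k - ξs)) ⬝ᵥ (B *ᵥ (ξ k - ξs))) :=
      mul_nonneg hσ.le (admm_dp_nonneg _)
    have t3 : 0 ≤ (1 - min μ μ⁻¹) * σ *
        ((A *ᵥ θ k + B *ᵥ ξ k) ⬝ᵥ (A *ᵥ θ k + B *ᵥ ξ k)) :=
      mul_nonneg (mul_nonneg (by linarith) hσ.le) (admm_dp_nonneg _)
    linarith
  -- monotonicity
  have hpart1 : ∀ k, 1 ≤ k → c (k+1) ≤ c k := by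
    intro k hk
    obtain ⟨j, rfl⟩ : ∃ j, k = j+1 := ⟨k-1, (Nat.succ_pred_eq_of_pos hk).symm⟩
    show c (j+2) ≤ c (j+1)
    have hkj := hkey j
    have t1 : 0 ≤ (min 1 (1 - μ + μ⁻¹)) * σ *
        ((A *ᵥ θ (j+2) + B *ᵥ ξ (j+2)) ⬝ᵥ (A *ᵥ θ (j+2) + B *ᵥ ξ (j+2))) :=
      mul_nonneg (mul_nonneg hαpos.le hσ.le) (admm_dp_nonneg _)
    have t2 : 0 ≤ (min μ (1 + μ - μ^2)) * σ *
        ((B *ᵥ (ξ (j+2) - ξ (j+1))) ⬝ᵥ (B *ᵥ (ξ (j+2) - ξ (j+1)))) :=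
      mul_nonneg (mul_nonneg hβpos.le hσ.le) (admm_dp_nonneg _)
    linarith
  -- convergence of c along k+1
  have hAnti : Antitone (fun k => c (k+1)) := by
    apply antitone_nat_of_succ_le
    intro nn
    exact hpart1 (nn+1) (Nat.le_add_left 1 nn)
  have hbdd : BddBelow (Set.range fun k => c (k+1)) := by
    refine ⟨0, ?_⟩
    rintro x ⟨k, rfl⟩
    exact hc0 (k+1)
  have hlim : Tendsto (fun k => c (k+1)) atTop (nhds (⨅ i, c (i+1))) :=
    tendsto_atTop_ciInf hAnti hbdd
  have hlim2 : Tendsto (fun k => c (k+2)) atTop (nhds (⨅ i, c (i+1))) :=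
    (tendsto_add_atTop_iff_nat 1).mpr hlim
  have hdiff0 : Tendsto (fun k => c (k+1) - c (k+2)) atTop (nhds 0) := by
    simpa using hlim.sub hlim2
  -- residual tends to zero
  have hα016 : 0 < min 1 (1 - μ + μ⁻¹) * σ := mul_pos hαpos hσ
  have hβ016 : 0 < min μ (1 + μ - μ^2) * σ := mul_pos hβpos hσ
  have hF : Tendsto (fun k => (A *ᵥ θ (k+1) + B *ᵥ ξ (k+1))
      ⬝ᵥ (A *ᵥ θ (k+1) + B *ᵥ ξ (k+1))) atTop (nhds 0) := by
    apply (tendsto_add_atTop_iff_nat 1).mp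
    apply squeeze_zero (g := fun k => (min 1 (1 - μ + μ⁻¹) * σ)⁻¹ * (c (k+1) - c (k+2)))
      (fun k => admm_dp_nonneg _)
    · intro k
      show (A *ᵥ θ (k+2) + B *ᵥ ξ (k+2)) ⬝ᵥ (A *ᵥ θ (k+2) + B *ᵥ ξ (k+2)) ≤ _
      rw [le_inv_mul_iff₀ hα016]
      have t2 : 0 ≤ (min μ (1 + μ - μ^2)) * σ *
          ((B *ᵥ (ξ (k+2) - ξ (k+1))) ⬝ᵥ (B *ᵥ (ξ (k+2) - ξ (k+1)))) :=
        mul_nonneg (mul_nonneg hβpos.le hσ.le) (admm_dp_nonneg _)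
      have := hkey k
      linarith
    · simpa using hdiff0.const_mul ((min 1 (1 - μ + μ⁻¹) * σ)⁻¹)
  have hG : Tendsto (fun k => (B *ᵥ (ξ (k+1) - ξ k))
      ⬝ᵥ (B *ᵥ (ξ (k+1) - ξ k))) atTop (nhds 0) := by
    apply (tendsto_add_atTop_iff_nat 1).mp
    apply squeeze_zero (g := fun k => (min μ (1 + μ - μ^2) * σ)⁻¹ * (c (k+1) - c (k+2)))
      (fun k => admm_dp_nonneg _)
    · intro k
      show (B *ᵥ (ξ (k+2) - ξ (k+1))) ⬝ᵥ (B *ᵥ (ξ (k+2) - ξ (k+1))) ≤ _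
      rw [le_inv_mul_iff₀ hβ016]
      have t1 : 0 ≤ (min 1 (1 - μ + μ⁻¹)) * σ *
          ((A *ᵥ θ (k+2) + B *ᵥ ξ (k+2)) ⬝ᵥ (A *ᵥ θ (k+2) + B *ᵥ ξ (k+2))) :=
        mul_nonneg (mul_nonneg hαpos.le hσ.le) (admm_dp_nonneg _)
      have := hkey k
      linarith
    · simpa using hdiff0.const_mul ((min μ (1 + μ - μ^2) * σ)⁻¹)
  have hΛdot : (fun k => (Λ (k+1) - Λ k) ⬝ᵥ (Λ (k+1) - Λ k))
      = fun k => (μ*σ)^2 * ((A *ᵥ θ (k+1) + B *ᵥ ξ (k+1))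
          ⬝ᵥ (A *ᵥ θ (k+1) + B *ᵥ ξ (k+1))) := by
    funext k
    rw [hΛ k]
    have e : Λ k - (μ * σ) • (A *ᵥ θ (k+1) + B *ᵥ ξ (k+1)) - Λ k
        = (-(μ*σ)) • (A *ᵥ θ (k+1) + B *ᵥ ξ (k+1)) := by
      rw [neg_smul]; abel
    rw [e, smul_dotProduct, dotProduct_smul, smul_eq_mul, smul_eq_mul]
    ring
  have hH : Tendsto (fun k => (Λ (k+1) - Λ k) ⬝ᵥ (Λ (k+1) - Λ k)) atTop (nhds 0) := by
    rw [hΛdot]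
    simpa using hF.const_mul ((μ*σ)^2)
  refine ⟨hpart1, ?_, ?_, ?_⟩
  · simpa [Function.comp_def, Real.sqrt_zero] using (Real.continuous_sqrt.tendsto 0).comp hF
  · simpa [Function.comp_def, Real.sqrt_zero] using (Real.continuous_sqrt.tendsto 0).comp hG
  · simpa [Function.comp_def, Real.sqrt_zero] using (Real.continuous_sqrt.tendsto 0).comp hH
end
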